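/- Let X and Y be locally isomorphic Λ-lattices such that there exists an isomorphism of 𝓜-lattices f : 𝓜X → 𝓜Y. Then f restricts to an isomorphism f|_X : X → Y of Λ-lattices if and only if Y ⊆ f(X). -/

import Mathlib

open Submodule Function

/-- A submodule is stable under (left multiplication by) a set `S` of operators. -/
def SetStable {A V R₀ : Type*} [Semiring R₀] [AddCommMonoid V] [Module R₀ V] [SMul A V]
    (S : Set A) (X : Submodule R₀ V) : Prop :=
  ∀ a ∈ S, ∀ x ∈ X, a • x ∈ X

/-- A linear map `f : X → Y` intertwines the action of every element of `S`. -/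
def IsEquivMap {A V W R₀ : Type*} [Semiring R₀] [AddCommMonoid V] [AddCommMonoid W]
    [Module R₀ V] [Module R₀ W] [SMul A V] [SMul A W]
    (S : Set A) (X : Submodule R₀ V) (Y : Submodule R₀ W) (f : X →ₗ[R₀] Y) : Prop :=
  ∀ a ∈ S, ∀ (v : V) (hv : v ∈ X) (hav : a • v ∈ X),
    ((f ⟨a • v, hav⟩ : Y) : W) = a • ((f ⟨v, hv⟩ : Y) : W)

/-- There exists an isomorphism of lattices, i.e. a bijective `R₀`-linear map
intertwining the action of every element of `S`. -/
def ExistsLatIso {A V W R₀ : Type*} [Semiring R₀] [AddCommMonoid V] [AddCommMonoid W]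
    [Module R₀ V] [Module R₀ W] [SMul A V] [SMul A W]
    (S : Set A) (X : Submodule R₀ V) (Y : Submodule R₀ W) : Prop :=
  ∃ f : X →ₗ[R₀] Y, Function.Bijective f ∧ IsEquivMap S X Y f

/-- `Λ` is an `𝒪`-order in the `K`-algebra `A`: it is a subring that is finitely
generated as an `𝒪`-module and spans `A` over `K`. -/
def IsOrder (𝒪 K A : Type*) [CommRing 𝒪] [Field K] [Ring A] [Algebra 𝒪 K] [Algebra K A]
    [Algebra 𝒪 A] (Λ : Subalgebra 𝒪 A) : Prop :=
  (Subalgebra.toSubmodule Λ).FG ∧ Submodule.span K (Λ : Set A) = ⊤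

/-- The localization `𝒪_𝔭` of `𝒪` at a prime `𝔭`, realized as a subalgebra of the
fraction field `K`. -/
noncomputable def localizationAt (𝒪 K : Type*) [CommRing 𝒪] [IsDomain 𝒪] [Field K]
    [Algebra 𝒪 K] [IsFractionRing 𝒪 K] (𝔭 : Ideal 𝒪) (h𝔭 : 𝔭.IsPrime) : Subalgebra 𝒪 K :=
  letI := h𝔭
  Localization.subalgebra K 𝔭.primeCompl
    (fun s hs => mem_nonZeroDivisors_of_ne_zero (fun h => hs (by simp [h])))

/-- The localization `X_𝔭 = 𝒪_𝔭 X` of a lattice `X`, as an `𝒪_𝔭`-submodule. -/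
noncomputable def locLattice (𝒪 K : Type*) [CommRing 𝒪] [IsDomain 𝒪] [Field K]
    [Algebra 𝒪 K] [IsFractionRing 𝒪 K] {V : Type*} [AddCommGroup V] [Module K V] [Module 𝒪 V]
    (𝔭 : Ideal 𝒪) (h𝔭 : 𝔭.IsPrime) (X : Submodule 𝒪 V) :
    Submodule (localizationAt 𝒪 K 𝔭 h𝔭) V :=
  Submodule.span (localizationAt 𝒪 K 𝔭 h𝔭) (X : Set V)

/-- Two `Λ`-lattices are locally isomorphic (lie in the same genus) if their
localizations at every maximal ideal `𝔭` of `𝒪` are isomorphic `Λ_𝔭`-lattices. -/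
noncomputable def LocallyIsomorphic (𝒪 K A : Type*) [CommRing 𝒪] [IsDomain 𝒪] [Field K]
    [Algebra 𝒪 K] [IsFractionRing 𝒪 K] [Ring A] [Algebra 𝒪 A]
    {V W : Type*} [AddCommGroup V] [Module K V] [Module 𝒪 V] [Module A V]
    [AddCommGroup W] [Module K W] [Module 𝒪 W] [Module A W]
    (Λ : Subalgebra 𝒪 A) (X : Submodule 𝒪 V) (Y : Submodule 𝒪 W) : Prop :=
  ∀ (𝔭 : Ideal 𝒪) (h𝔭 : 𝔭.IsMaximal),
    ExistsLatIso (Λ : Set A) (locLattice 𝒪 K 𝔭 h𝔭.isPrime X) (locLattice 𝒪 K 𝔭 h𝔭.isPrime Y)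

/-- `𝓜` is a maximal `𝒪`-order in `A`. -/
def IsMaximalOrder (𝒪 K A : Type*) [CommRing 𝒪] [Field K] [Ring A] [Algebra 𝒪 K]
    [Algebra K A] [Algebra 𝒪 A] (𝓜 : Subalgebra 𝒪 A) : Prop :=
  IsOrder 𝒪 K A 𝓜 ∧ ∀ Λ'' : Subalgebra 𝒪 A, IsOrder 𝒪 K A Λ'' → 𝓜 ≤ Λ'' → 𝓜 = Λ''

/-! The direction `Y ⊆ f(X) ⇒ f(X) ⊆ Y` is local. At a maximal ideal `𝔭`, pick `c ∈ 𝒪 ∖ 0` with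
`c𝓜 ⊆ Λ`; then a local `Λ`-isomorphism `h : X_𝔭 ≅ Y_𝔭` extends to `H = c⁻¹ h(c ·) : 𝓜X_𝔭 ≅ 𝓜Y_𝔭`,
while `f` localizes to `F : 𝓜X_𝔭 ≅ 𝓜Y_𝔭`. Now `φ = H⁻¹F` is an automorphism of the noetherian
module `𝓜X_𝔭` with `X_𝔭 ⊆ φ(X_𝔭)`, because `H(X_𝔭) = Y_𝔭 ⊆ f(X)_𝔭 = F(X_𝔭)`. The ascending
chain `φⁿ(X_𝔭)` stabilizes, and injectivity of `φ` gives `φ(X_𝔭) = X_𝔭`, i.e. `f(X)_𝔭 = Y_𝔭`. -/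

namespace Submodule

theorem map_eq_self_of_le_map {R M : Type*} [Ring R] [AddCommGroup M] [Module R M]
    [IsNoetherian R M] (e : M ≃ₗ[R] M) {p : Submodule R M} (h : p ≤ p.map (e : M →ₗ[R] M)) :
    p.map (e : M →ₗ[R] M) = p := by
  set Φ : Submodule R M → Submodule R M := map (e : M →ₗ[R] M)
  have hΦ : Monotone Φ := fun _ _ => map_mono
  obtain ⟨n, hn⟩ := monotone_stabilizes_iff_noetherian.mpr ‹_›
    ⟨fun n => Φ^[n] p, monotone_nat_of_le_succ fun n => by
      rw [Function.iterate_succ_apply]; exact hΦ.iterate n h⟩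
  have hn' : Φ^[n] p = Φ^[n] (Φ p) := by
    simpa [Function.iterate_succ_apply] using hn (n + 1) n.le_succ
  exact ((map_injective_of_injective e.injective).iterate n hn').symm

theorem map_eq_map_of_range_eq {R M N : Type*} [Ring R] [AddCommGroup M] [Module R M]
    [AddCommGroup N] [Module R N] [IsNoetherian R M] {F G : M →ₗ[R] N}
    (hF : Function.Injective F) (hG : Function.Injective G)
    (hFG : LinearMap.range F = LinearMap.range G) {p : Submodule R M}
    (h : p.map G ≤ p.map F) : p.map F = p.map G := by
  set e : M ≃ₗ[R] M := (LinearEquiv.ofInjective F hF).trans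
    ((LinearEquiv.ofEq _ _ hFG).trans (LinearEquiv.ofInjective G hG).symm)
  have hGe : G ∘ₗ (e : M →ₗ[R] M) = F := by
    ext x
    simp [e]
  have hF_eq : p.map F = (p.map (e : M →ₗ[R] M)).map G := by rw [← hGe, map_comp]
  rw [hF_eq] at h ⊢
  rw [map_eq_self_of_le_map e ((map_le_map_iff_of_injective hG _ _).mp h)]

end Submodule

section SpanSMul

variable {R A V : Type*} [CommRing R] [Ring A] [AddCommGroup V] [Module R V] [Module A V]

/-- For an order `𝓜` and a lattice `X`, `spanSMul 𝓜 X` is the lattice `𝓜X`. -/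
def spanSMul (S : Set A) (X : Submodule R V) : Submodule R V :=
  span R {v : V | ∃ a ∈ S, ∃ x ∈ X, v = a • x}

theorem smul_mem_spanSMul {S : Set A} {X : Submodule R V} {a : A} (ha : a ∈ S) {x : V}
    (hx : x ∈ X) : a • x ∈ spanSMul S X :=
  subset_span ⟨a, ha, x, hx, rfl⟩

theorem le_spanSMul {S : Set A} (hS : (1 : A) ∈ S) (X : Submodule R V) : X ≤ spanSMul S X :=
  fun x hx => by simpa using smul_mem_spanSMul hS hx

theorem spanSMul_span {R' : Type*} [CommRing R'] [Algebra R R'] [Module R' V]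
    [IsScalarTower R R' V] [SMulCommClass R' A V] (S : Set A) (X : Submodule R V) :
    spanSMul S (span R' (X : Set V)) = span R' (spanSMul S X : Set V) := by
  rw [spanSMul, spanSMul, span_span_of_tower]
  refine le_antisymm (span_le.mpr ?_) (span_mono ?_)
  · rintro _ ⟨a, ha, v, hv, rfl⟩
    induction hv using span_induction with
    | mem x hx => exact subset_span ⟨a, ha, x, hx, rfl⟩
    | zero => simp
    | add v w _ _ hv hw => rw [smul_add]; exact add_mem hv hw
    | smul r v _ hv => rw [← smul_comm r a v]; exact smul_mem _ r hv
  · rintro _ ⟨a, ha, x, hx, rfl⟩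
    exact ⟨a, ha, x, subset_span hx, rfl⟩

theorem spanSMul_fg [Algebra R A] [IsScalarTower R A V] {S : Submodule R A} (hS : S.FG)
    {X : Submodule R V} (hX : X.FG) : (spanSMul (S : Set A) X).FG := by
  have : spanSMul (S : Set A) X = map₂ (Algebra.lsmul R R V).toLinearMap S X := by
    rw [map₂_eq_span_image2, spanSMul]
    congr 1
    ext v
    simp [Set.mem_smul, eq_comm]
  exact this ▸ hS.map₂ _ hX

end SpanSMul

theorem isNoetherian_spanSMul_span {R R' A V : Type*} [CommRing R] [CommRing R'] [Algebra R R']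
    [IsNoetherianRing R'] [Ring A] [Algebra R A] [AddCommGroup V] [Module R V] [Module R' V]
    [IsScalarTower R R' V] [Module A V] [IsScalarTower R A V] [SMulCommClass R' A V]
    {𝓜 : Subalgebra R A} (h𝓜 : (Subalgebra.toSubmodule 𝓜).FG) {X : Submodule R V}
    (hX : X.FG) : IsNoetherian R' (spanSMul (𝓜 : Set A) (span R' (X : Set V))) := by
  refine isNoetherian_of_fg_of_noetherian _ ?_
  obtain ⟨t, ht⟩ : (spanSMul (𝓜 : Set A) X).FG := spanSMul_fg h𝓜 hX
  rw [spanSMul_span, ← ht, span_span_of_tower]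
  exact fg_span t.finite_toSet

section Denominators

variable {R R' E : Type*} [CommRing R] [CommRing R'] [Algebra R R'] (S : Submonoid R)
  [IsLocalization S R'] [AddCommGroup E] [Module R E] [Module R' E] [IsScalarTower R R' E]

theorem span_eq_localized' (M : Submodule R E) :
    haveI := isLocalizedModule_id S E R'
    span R' (M : Set E) = M.localized' R' S LinearMap.id := by
  rw [localized'_eq_span, LinearMap.id_coe, Set.image_id]

theorem exists_smul_mem_of_mem_span {M : Submodule R E} {x : E}
    (hx : x ∈ span R' (M : Set E)) : ∃ s ∈ S, s • x ∈ M := by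
  have := isLocalizedModule_id S E R'
  rw [span_eq_localized' S] at hx
  obtain ⟨m, hm, s, hs⟩ := hx
  rw [IsLocalizedModule.mk'_eq_iff] at hs
  exact ⟨s, s.2, hs ▸ hm⟩

theorem exists_smul_mem_of_fg {M N : Submodule R E} (hN : N.FG)
    (hNM : ∀ n ∈ N, n ∈ span R' (M : Set E)) : ∃ s ∈ S, ∀ n ∈ N, s • n ∈ M := by
  induction N, hN using fg_induction with
  | singleton x =>
    obtain ⟨s, hs, hsx⟩ := exists_smul_mem_of_mem_span S (hNM x (mem_span_singleton_self x))
    refine ⟨s, hs, fun n hn => ?_⟩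
    obtain ⟨r, rfl⟩ := mem_span_singleton.mp hn
    rw [smul_comm]
    exact M.smul_mem r hsx
  | sup N₁ N₂ _ _ ih₁ ih₂ =>
    obtain ⟨s₁, hs₁, h₁⟩ := ih₁ fun n hn => hNM n (mem_sup_left hn)
    obtain ⟨s₂, hs₂, h₂⟩ := ih₂ fun n hn => hNM n (mem_sup_right hn)
    refine ⟨s₂ * s₁, mul_mem hs₂ hs₁, fun n hn => ?_⟩
    obtain ⟨n₁, hn₁, n₂, hn₂, rfl⟩ := mem_sup.mp hn
    rw [smul_add, mul_smul, mul_comm, mul_smul]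
    exact add_mem (M.smul_mem _ (h₁ n₁ hn₁)) (M.smul_mem _ (h₂ n₂ hn₂))

theorem exists_ne_zero_smul_mem_of_fg {K A : Type*} [Nontrivial R] [Field K] [Algebra R K]
    [IsFractionRing R K] [Ring A] [Algebra K A] [Algebra R A] [IsScalarTower R K A]
    {Λ 𝓜 : Subalgebra R A}
    (hΛ : span K (Λ : Set A) = ⊤) (h𝓜 : (Subalgebra.toSubmodule 𝓜).FG) :
    ∃ c : K, c ≠ 0 ∧ ∀ a ∈ (𝓜 : Set A), c • a ∈ (Λ : Set A) := by
  obtain ⟨d, hd, hdΛ⟩ := exists_smul_mem_of_fg (R' := K) (nonZeroDivisors R)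
    (M := Subalgebra.toSubmodule Λ) h𝓜 fun a _ => by simp [hΛ]
  refine ⟨algebraMap R K d, IsFractionRing.to_map_ne_zero_of_mem_nonZeroDivisors hd,
    fun a ha => ?_⟩
  rw [algebraMap_smul]
  exact hdΛ a ha

end Denominators

theorem SetStable.span {R R' A V : Type*} [CommRing R] [CommRing R'] [Algebra R R']
    [AddCommGroup V] [Module R V] [Module R' V] [IsScalarTower R R' V]
    [Monoid A] [DistribMulAction A V] [SMulCommClass R' A V] {Λ : Set A} {X : Submodule R V}
    (hX : SetStable Λ X) : SetStable Λ (span R' (X : Set V)) := by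
  intro a ha v hv
  induction hv using span_induction with
  | mem x hx => exact subset_span (hX a ha x hx)
  | zero => simp
  | add v w _ _ hv hw => rw [smul_add]; exact add_mem hv hw
  | smul r v _ hv => rw [← smul_comm r a v]; exact smul_mem _ r hv

section Extension

variable {R K A V W : Type*} [CommRing R] [Field K] [Ring A] [Algebra K A]
  [AddCommGroup V] [Module K V] [Module R V] [Module A V] [IsScalarTower K A V]
  [AddCommGroup W] [Module K W] [Module R W] [Module A W] [IsScalarTower K A W]
  {Λ 𝓜 : Set A} {c : K} {X : Submodule R V} {Y : Submodule R W}

theorem smul_mem_of_mem_spanSMul [Algebra R K] [IsScalarTower R K V]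
    (hcΛ : ∀ a ∈ 𝓜, c • a ∈ Λ) (hX : SetStable Λ X) {m : V} (hm : m ∈ spanSMul 𝓜 X) :
    c • m ∈ X := by
  induction hm using span_induction with
  | mem v hv =>
    obtain ⟨a, ha, x, hx, rfl⟩ := hv
    rw [← smul_assoc]
    exact hX _ (hcΛ a ha) x hx
  | zero => simp
  | add v w _ _ hv hw => rw [smul_add]; exact add_mem hv hw
  | smul r v _ hv => rw [smul_comm]; exact X.smul_mem r hv

theorem IsEquivMap.apply_smul {h : X →ₗ[R] Y} (hh : IsEquivMap Λ X Y h) (hc : c • (1 : A) ∈ Λ)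
    {x : V} (hx : x ∈ X) (hcx : c • x ∈ X) : (h ⟨c • x, hcx⟩ : W) = c • (h ⟨x, hx⟩ : W) := by
  convert hh _ hc x hx (by rwa [smul_one_smul]) using 3 <;> simp

theorem IsEquivMap.apply_smul_of_smul_mem {h : X →ₗ[R] Y} (hh : IsEquivMap Λ X Y h)
    (hc : c ≠ 0) (hc1 : c • (1 : A) ∈ Λ) (hX : SetStable Λ X) {a : A} (ha : c • a ∈ Λ)
    {x : V} (hx : x ∈ X) (hcax : c • a • x ∈ X) :
    (h ⟨c • a • x, hcax⟩ : W) = c • a • (h ⟨x, hx⟩ : W) := by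
  have hcx : c • x ∈ X := by simpa using hX _ hc1 x hx
  have hcca : (c • a) • c • x = c • c • a • x := by rw [smul_assoc, smul_comm a c x]
  have hmem : (c • a) • c • x ∈ X := hX _ ha _ hcx
  have key := hh.apply_smul hc1 hcax (hcca ▸ hmem)
  rw [← congrArg (fun v : X => (h v : W)) (Subtype.ext hcca : (⟨_, hmem⟩ : X) = ⟨_, _⟩),
    hh _ ha _ hcx hmem, hh.apply_smul hc1 hx hcx, smul_assoc, smul_comm a c] at key
  exact smul_right_injective W hc key.symm

theorem exists_extension_to_spanSMul [Algebra R K] [IsScalarTower R K V] [IsScalarTower R K W]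
    (h𝓜 : (1 : A) ∈ 𝓜) (hc : c ≠ 0) (hcΛ : ∀ a ∈ 𝓜, c • a ∈ Λ) (hX : SetStable Λ X)
    (h : X →ₗ[R] Y) (hhb : Function.Bijective h) (hh : IsEquivMap Λ X Y h) :
    ∃ H : spanSMul 𝓜 X →ₗ[R] W, Function.Injective H ∧
      LinearMap.range H = spanSMul 𝓜 Y ∧
      ∀ (x : V) (hx : x ∈ X) (hx' : x ∈ spanSMul 𝓜 X), H ⟨x, hx'⟩ = h ⟨x, hx⟩ := by
  have hc1 : c • (1 : A) ∈ Λ := hcΛ 1 h𝓜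
  have hcX (m : V) (hm : m ∈ spanSMul 𝓜 X) : c • m ∈ X := smul_mem_of_mem_spanSMul hcΛ hX hm
  let H : spanSMul 𝓜 X →ₗ[R] W :=
    c⁻¹ • (Y.subtype ∘ₗ h ∘ₗ (c • LinearMap.id : V →ₗ[R] V).restrict hcX)
  have hH (m : V) (hm : m ∈ spanSMul 𝓜 X) : H ⟨m, hm⟩ = c⁻¹ • (h ⟨c • m, hcX m hm⟩ : W) := rfl
  have hH_gen {a : A} (ha : a ∈ 𝓜) {x : V} (hx : x ∈ X) (hax : a • x ∈ spanSMul 𝓜 X) :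
      H ⟨a • x, hax⟩ = a • (h ⟨x, hx⟩ : W) := by
    rw [hH, hh.apply_smul_of_smul_mem hc hc1 hX (hcΛ a ha) hx, inv_smul_smul₀ hc]
  refine ⟨H, ?_, ?_, fun x hx hx' => by rw [hH, hh.apply_smul hc1 hx, inv_smul_smul₀ hc]⟩
  · rw [← LinearMap.ker_eq_bot, LinearMap.ker_eq_bot']
    rintro ⟨m, hm⟩ hm0
    rw [hH, smul_eq_zero, inv_eq_zero, or_iff_right hc, ZeroMemClass.coe_eq_zero,
      ← map_zero h, hhb.1.eq_iff, Submodule.mk_eq_zero, smul_eq_zero, or_iff_right hc] at hm0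
    exact Subtype.ext hm0
  · have htop : (⊤ : Submodule R (spanSMul 𝓜 X)) =
        span R (Subtype.val ⁻¹' {v : V | ∃ a ∈ 𝓜, ∃ x ∈ X, v = a • x}) :=
      span_span_coe_preimage.symm
    rw [LinearMap.range_eq_map, htop, map_span]
    congr 1
    ext w
    constructor
    · rintro ⟨⟨_, hv⟩, ⟨a, ha, x, hx, rfl⟩, rfl⟩
      exact ⟨a, ha, h ⟨x, hx⟩, (h ⟨x, hx⟩).2, hH_gen ha hx hv⟩
    · rintro ⟨a, ha, y, hy, rfl⟩
      obtain ⟨⟨x, hx⟩, hxy⟩ := hhb.2 ⟨y, hy⟩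
      exact ⟨⟨a • x, smul_mem_spanSMul ha hx⟩, ⟨a, ha, x, hx, rfl⟩, by rw [hH_gen ha hx, hxy]⟩

end Extension

section Localization

variable {R R' V W : Type*} [CommRing R] [CommRing R'] [Algebra R R']
  [AddCommGroup V] [Module R V] [Module R' V] [IsScalarTower R R' V]
  [AddCommGroup W] [Module R W] [Module R' W] [IsScalarTower R R' W]

theorem exists_localization_of_linearEquiv (S : Submonoid R) [IsLocalization S R']
    {M : Submodule R V} {N : Submodule R W} (e : M ≃ₗ[R] N) :
    ∃ F : span R' (M : Set V) →ₗ[R'] W, Function.Injective F ∧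
      LinearMap.range F = span R' (N : Set W) ∧
      ∀ (m : V) (hm : m ∈ M) (hm' : m ∈ span R' (M : Set V)), F ⟨m, hm'⟩ = e ⟨m, hm⟩ := by
  have := isLocalizedModule_id S V R'
  have := isLocalizedModule_id S W R'
  let E : span R' (M : Set V) ≃ₗ[R'] span R' (N : Set W) :=
    (LinearEquiv.ofEq _ _ (span_eq_localized' S M)).trans
      ((IsLocalizedModule.mapEquiv S (M.toLocalized' R' S LinearMap.id)
        (N.toLocalized' R' S LinearMap.id) R' e).trans
      (LinearEquiv.ofEq _ _ (span_eq_localized' S N).symm))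
  refine ⟨(span R' (N : Set W)).subtype ∘ₗ E, ?_, ?_, fun m hm hm' => ?_⟩
  · exact Subtype.val_injective.comp E.injective
  · rw [LinearMap.range_comp_of_range_eq_top _ E.range, range_subtype]
  · have : LinearEquiv.ofEq _ _ (span_eq_localized' (R' := R') S M) ⟨m, hm'⟩ =
        M.toLocalized' R' S LinearMap.id ⟨m, hm⟩ := rfl
    simp only [E, LinearMap.coe_comp, Function.comp_apply, LinearEquiv.coe_coe,
      LinearEquiv.trans_apply, this, IsLocalizedModule.mapEquiv_apply,
      IsLocalizedModule.map_apply]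
    rfl

end Localization

section LocalGlobal

variable {𝒪 K : Type*} [CommRing 𝒪] [IsDomain 𝒪] [Field K] [Algebra 𝒪 K] [IsFractionRing 𝒪 K]

instance localizationAt.isLocalization (𝔭 : Ideal 𝒪) [h𝔭 : 𝔭.IsPrime] :
    IsLocalization 𝔭.primeCompl (localizationAt 𝒪 K 𝔭 h𝔭) := by
  unfold localizationAt; infer_instance

theorem le_of_forall_le_locLattice {W : Type*} [AddCommGroup W] [Module K W] [Module 𝒪 W]
    [IsScalarTower 𝒪 K W] {N Y : Submodule 𝒪 W}
    (h : ∀ (𝔭 : Ideal 𝒪) (h𝔭 : 𝔭.IsMaximal), ∀ z ∈ N, z ∈ locLattice 𝒪 K 𝔭 h𝔭.isPrime Y) :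
    N ≤ Y := by
  have (𝔭 : Ideal 𝒪) [h𝔭 : 𝔭.IsMaximal] :
      IsLocalizedModule 𝔭.primeCompl (LinearMap.id : W →ₗ[𝒪] W) :=
    isLocalizedModule_id _ W (localizationAt 𝒪 K 𝔭 h𝔭.isPrime)
  intro z hz
  refine @mem_of_localization_maximal _ _ _ _ _ (fun _ _ => W) _ _ (fun _ _ => LinearMap.id)
    this z Y fun 𝔭 h𝔭 => ?_
  have hz𝔭 := h 𝔭 h𝔭 z hz
  rwa [locLattice, span_eq_localized' 𝔭.primeCompl] at hz𝔭

end LocalGlobal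

theorem mem_locLattice_of_le_image {𝒪 K A V W : Type*} [CommRing 𝒪] [IsDomain 𝒪]
    [IsNoetherianRing 𝒪] [Field K] [Algebra 𝒪 K] [IsFractionRing 𝒪 K] [Ring A] [Algebra K A]
    [Algebra 𝒪 A] [IsScalarTower 𝒪 K A]
    [AddCommGroup V] [Module K V] [Module 𝒪 V] [IsScalarTower 𝒪 K V] [Module A V]
    [IsScalarTower K A V]
    [AddCommGroup W] [Module K W] [Module 𝒪 W] [IsScalarTower 𝒪 K W] [Module A W]
    [IsScalarTower K A W]
    {Λ 𝓜 : Subalgebra 𝒪 A} (hΛ : span K (Λ : Set A) = ⊤) (h𝓜 : (Subalgebra.toSubmodule 𝓜).FG)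
    {X : Submodule 𝒪 V} (hXfg : X.FG) (hXst : SetStable (Λ : Set A) X) {Y : Submodule 𝒪 W}
    {𝔭 : Ideal 𝒪} (h𝔭 : 𝔭.IsPrime)
    (hloc : ExistsLatIso (Λ : Set A) (locLattice 𝒪 K 𝔭 h𝔭 X) (locLattice 𝒪 K 𝔭 h𝔭 Y))
    (e : spanSMul (𝓜 : Set A) X ≃ₗ[𝒪] spanSMul (𝓜 : Set A) Y)
    (hY : ∀ y ∈ Y, ∃ (x : V) (hx : x ∈ spanSMul (𝓜 : Set A) X), x ∈ X ∧ (e ⟨x, hx⟩ : W) = y)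
    {x : V} (hx : x ∈ X) (hx' : x ∈ spanSMul (𝓜 : Set A) X) :
    (e ⟨x, hx'⟩ : W) ∈ locLattice 𝒪 K 𝔭 h𝔭 Y := by
  let R' := localizationAt 𝒪 K 𝔭 h𝔭
  have : IsNoetherianRing R' := IsLocalization.isNoetherianRing 𝔭.primeCompl R' ‹_›
  have := IsScalarTower.to₁₃₄ 𝒪 K A V
  have := isNoetherian_spanSMul_span (R' := R') h𝓜 hXfg
  obtain ⟨h, hhb, hh⟩ := hloc
  obtain ⟨c, hc, hcΛ⟩ := exists_ne_zero_smul_mem_of_fg hΛ h𝓜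
  obtain ⟨H, hHinj, hHrange, hHh⟩ := exists_extension_to_spanSMul (R := R') 𝓜.one_mem hc hcΛ
    (hXst.span (R' := R')) h hhb hh
  obtain ⟨F, hFinj, hFrange, hFe⟩ := exists_localization_of_linearEquiv (R' := R') 𝔭.primeCompl e
  let F' := F ∘ₗ (LinearEquiv.ofEq _ _ (spanSMul_span (R' := R') (𝓜 : Set A) X)).toLinearMap
  let P := (span R' (X : Set V)).comap (spanSMul (𝓜 : Set A) (span R' (X : Set V))).subtype
  have hF'P {x : V} (hx : x ∈ X) (hx' : x ∈ spanSMul (𝓜 : Set A) X) :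
      (e ⟨x, hx'⟩ : W) ∈ P.map F' :=
    ⟨⟨x, le_spanSMul 𝓜.one_mem _ (subset_span hx)⟩, subset_span hx, hFe x hx' _⟩
  have hYF : span R' (Y : Set W) ≤ P.map F' := span_le.mpr fun y hy => by
    obtain ⟨x, hx', hx, rfl⟩ := hY y hy
    exact hF'P hx hx'
  have hFH : P.map F' = P.map H := by
    refine map_eq_map_of_range_eq (F := F') (hFinj.comp (LinearEquiv.injective _)) hHinj ?_ ?_
    · rw [LinearMap.range_comp_of_range_eq_top _ (LinearEquiv.range _), hFrange, hHrange,
        locLattice, spanSMul_span]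
    · rintro _ ⟨⟨m, hm⟩, hmP, rfl⟩
      rw [hHh m hmP hm]
      exact hYF (h ⟨m, hmP⟩).2
  obtain ⟨⟨m, hm⟩, hmP, hme⟩ := hFH ▸ hF'P hx hx'
  rw [← hme, hHh m hmP hm]
  exact (h ⟨m, hmP⟩).2

theorem stmt_4_general
    (𝒪 : Type*) [CommRing 𝒪] [IsDomain 𝒪] [IsDedekindDomain 𝒪]
    (K : Type*) [Field K] [Algebra 𝒪 K] [IsFractionRing 𝒪 K]
    (A : Type*) [Ring A] [Algebra K A] [Algebra 𝒪 A] [IsScalarTower 𝒪 K A]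
    (Λ 𝓜 : Subalgebra 𝒪 A) (hΛ : IsOrder 𝒪 K A Λ)
    (h𝓜 : IsMaximalOrder 𝒪 K A 𝓜) (hΛ𝓜 : Λ ≤ 𝓜)
    (V : Type*) [AddCommGroup V] [Module K V] [Module 𝒪 V] [IsScalarTower 𝒪 K V]
    [Module A V] [IsScalarTower K A V]
    (W : Type*) [AddCommGroup W] [Module K W] [Module 𝒪 W] [IsScalarTower 𝒪 K W]
    [Module A W] [IsScalarTower K A W]
    (X : Submodule 𝒪 V) (hXfg : X.FG) (hXst : SetStable (Λ : Set A) X)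
    (Y : Submodule 𝒪 W)
    (hloc : LocallyIsomorphic 𝒪 K A Λ X Y)
    (f : (Submodule.span 𝒪 {v : V | ∃ a ∈ 𝓜, ∃ x ∈ X, v = a • x}) →ₗ[𝒪]
      (Submodule.span 𝒪 {w : W | ∃ a ∈ 𝓜, ∃ y ∈ Y, w = a • y}))
    (hfb : Function.Bijective f)
    (hfe : IsEquivMap (𝓜 : Set A)
      (Submodule.span 𝒪 {v : V | ∃ a ∈ 𝓜, ∃ x ∈ X, v = a • x})
      (Submodule.span 𝒪 {w : W | ∃ a ∈ 𝓜, ∃ y ∈ Y, w = a • y}) f) :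
    -- `f` restricts to an isomorphism of `Λ`-lattices `X → Y`
    (∃ g : X →ₗ[𝒪] Y, Function.Bijective g ∧ IsEquivMap (Λ : Set A) X Y g ∧
      ∀ (x : V) (hx : x ∈ X)
        (hx' : x ∈ Submodule.span 𝒪 {v : V | ∃ a ∈ 𝓜, ∃ x ∈ X, v = a • x}),
        ((g ⟨x, hx⟩ : Y) : W) = ((f ⟨x, hx'⟩ :
          Submodule.span 𝒪 {w : W | ∃ a ∈ 𝓜, ∃ y ∈ Y, w = a • y}) : W))
    ↔
    -- `Y ⊆ f(X)`
    (∀ y : W, y ∈ Y →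
      ∃ (x : V) (hx' : x ∈ Submodule.span 𝒪 {v : V | ∃ a ∈ 𝓜, ∃ x ∈ X, v = a • x}),
        x ∈ X ∧ ((f ⟨x, hx'⟩ :
          Submodule.span 𝒪 {w : W | ∃ a ∈ 𝓜, ∃ y ∈ Y, w = a • y}) : W) = y) := by
  have hXMX : X ≤ spanSMul (𝓜 : Set A) X := le_spanSMul 𝓜.one_mem X
  let θ : X →ₗ[𝒪] W := (spanSMul (𝓜 : Set A) Y).subtype ∘ₗ f ∘ₗ inclusion hXMX
  constructor
  · rintro ⟨g, hg, -, hgf⟩ y hy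
    obtain ⟨⟨x, hx⟩, hxy⟩ := hg.2 ⟨y, hy⟩
    exact ⟨x, hXMX hx, hx, by rw [← hgf x hx (hXMX hx), hxy]⟩
  · intro hY
    have hθY : LinearMap.range θ ≤ Y := le_of_forall_le_locLattice fun 𝔭 h𝔭 => by
      rintro _ ⟨⟨x, hx⟩, rfl⟩
      exact mem_locLattice_of_le_image hΛ.2 h𝓜.1.1 hXfg hXst h𝔭.isPrime (hloc 𝔭 h𝔭)
        (LinearEquiv.ofBijective f hfb) hY hx _
    refine ⟨θ.codRestrict Y fun x => hθY ⟨x, rfl⟩, ⟨fun x x' hxx' => ?_, fun y => ?_⟩,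
      fun a ha v hv hav => hfe a (hΛ𝓜 ha) v (hXMX hv) (hXMX hav), fun _ _ _ => rfl⟩
    · have hθ := congrArg Subtype.val hxx'
      exact inclusion_injective hXMX (hfb.1 (Subtype.val_injective hθ))
    · obtain ⟨x, _, hx, hxy⟩ := hY y y.2
      exact ⟨⟨x, hx⟩, Subtype.ext hxy⟩

/-- Let `X` and `Y` be locally isomorphic `Λ`-lattices and let
`f : 𝓜X → 𝓜Y` be an isomorphism of `𝓜`-lattices.  Then `f` restricts to an isomorphism
`f|_X : X → Y` of `Λ`-lattices if and only if `Y ⊆ f(X)`. -/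
theorem stmt_4
    (𝒪 : Type*) [CommRing 𝒪] [IsDomain 𝒪] [IsDedekindDomain 𝒪]
    (K : Type*) [Field K] [Algebra 𝒪 K] [IsFractionRing 𝒪 K]
    (hOK : ¬ Function.Surjective (algebraMap 𝒪 K))
    (A : Type*) [Ring A] [Algebra K A] [Algebra 𝒪 A] [IsScalarTower 𝒪 K A]
    [FiniteDimensional K A] [IsSemisimpleRing A] [Algebra.IsSeparable K A]
    (Λ 𝓜 : Subalgebra 𝒪 A) (hΛ : IsOrder 𝒪 K A Λ)
    (h𝓜 : IsMaximalOrder 𝒪 K A 𝓜) (hΛ𝓜 : Λ ≤ 𝓜)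
    (V : Type*) [AddCommGroup V] [Module K V] [Module 𝒪 V] [IsScalarTower 𝒪 K V]
    [Module A V] [IsScalarTower K A V]
    (W : Type*) [AddCommGroup W] [Module K W] [Module 𝒪 W] [IsScalarTower 𝒪 K W]
    [Module A W] [IsScalarTower K A W]
    (X : Submodule 𝒪 V) (hXfg : X.FG) (hXst : SetStable (Λ : Set A) X)
    (Y : Submodule 𝒪 W) (hYfg : Y.FG) (hYst : SetStable (Λ : Set A) Y)
    (hloc : LocallyIsomorphic 𝒪 K A Λ X Y)
    (f : (Submodule.span 𝒪 {v : V | ∃ a ∈ 𝓜, ∃ x ∈ X, v = a • x}) →ₗ[𝒪]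
      (Submodule.span 𝒪 {w : W | ∃ a ∈ 𝓜, ∃ y ∈ Y, w = a • y}))
    (hfb : Function.Bijective f)
    (hfe : IsEquivMap (𝓜 : Set A)
      (Submodule.span 𝒪 {v : V | ∃ a ∈ 𝓜, ∃ x ∈ X, v = a • x})
      (Submodule.span 𝒪 {w : W | ∃ a ∈ 𝓜, ∃ y ∈ Y, w = a • y}) f) :
    -- `f` restricts to an isomorphism of `Λ`-lattices `X → Y`
    (∃ g : X →ₗ[𝒪] Y, Function.Bijective g ∧ IsEquivMap (Λ : Set A) X Y g ∧
      ∀ (x : V) (hx : x ∈ X)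
        (hx' : x ∈ Submodule.span 𝒪 {v : V | ∃ a ∈ 𝓜, ∃ x ∈ X, v = a • x}),
        ((g ⟨x, hx⟩ : Y) : W) = ((f ⟨x, hx'⟩ :
          Submodule.span 𝒪 {w : W | ∃ a ∈ 𝓜, ∃ y ∈ Y, w = a • y}) : W))
    ↔
    -- `Y ⊆ f(X)`
    (∀ y : W, y ∈ Y →
      ∃ (x : V) (hx' : x ∈ Submodule.span 𝒪 {v : V | ∃ a ∈ 𝓜, ∃ x ∈ X, v = a • x}),
        x ∈ X ∧ ((f ⟨x, hx'⟩ :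
          Submodule.span 𝒪 {w : W | ∃ a ∈ 𝓜, ∃ y ∈ Y, w = a • y}) : W) = y) :=
  stmt_4_general 𝒪 K A Λ 𝓜 hΛ h𝓜 hΛ𝓜 V W X hXfg hXst Y hloc f hfb hfe
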